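/- For θ > 0 and each n ≥ 1, the values g_2(λ) = n!·θ^ℓ·(1+θ)^ℓ/[θ]_n · ∏_{j=1}^ℓ (λ_j+1)/(Λ_j·(Λ_j+2θ+1)) summed over all compositions λ of n equal 1, where Λ_j = λ_j + ... + λ_ℓ. -/

import Mathlib

noncomputable def risingFact (x : ℝ) (k : ℕ) : ℝ := ∏ i ∈ Finset.range k, (x + i)

lemma risingFact_zero (x : ℝ) : risingFact x 0 = 1 := by simp [risingFact]

lemma risingFact_succ (x : ℝ) (k : ℕ) : risingFact x (k+1) = risingFact x k * (x + k) :=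
  Finset.prod_range_succ _ _

lemma risingFact_succ' (x : ℝ) (k : ℕ) : risingFact x (k+1) = x * risingFact (x+1) k := by
  rw [risingFact, Finset.prod_range_succ', mul_comm]
  simp only [Nat.cast_zero, add_zero]
  congr 1
  apply Finset.prod_congr rfl
  intro i _
  push_cast
  ring

lemma risingFact_pos {x : ℝ} (hx : 0 < x) (k : ℕ) : 0 < risingFact x k := by
  apply Finset.prod_pos
  intro i _
  positivity

lemma sumB (θ : ℝ) (hθ : 0 < θ) (n : ℕ) :
    ∑ k ∈ Finset.range (n+1), risingFact θ k / k.factorial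
      = risingFact (θ+1) n / n.factorial := by
  induction n with
  | zero => simp [risingFact_zero]
  | succ n ih =>
    rw [Finset.sum_range_succ, ih, risingFact_succ' θ n, risingFact_succ (θ+1) n]
    have h1 : ((n+1).factorial : ℝ) = (n+1) * n.factorial := by
      push_cast [Nat.factorial_succ]; ring
    have h2 : (n.factorial : ℝ) ≠ 0 := Nat.cast_ne_zero.mpr n.factorial_ne_zero
    rw [h1]
    field_simp
    ring

lemma sumA (θ : ℝ) (hθ : 0 < θ) (n : ℕ) :
    ∑ k ∈ Finset.range (n+1), ((n:ℝ) + 2 - k) * (risingFact θ k / k.factorial)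
      = (risingFact (θ+2) n + risingFact (θ+1) n) / n.factorial := by
  induction n with
  | zero => norm_num [risingFact_zero]
  | succ n ih =>
    rw [Finset.sum_range_succ]
    have split : ∑ k ∈ Finset.range (n+1), ((n:ℝ) + 1 + 2 - k) * (risingFact θ k / k.factorial)
        = (∑ k ∈ Finset.range (n+1), ((n:ℝ) + 2 - k) * (risingFact θ k / k.factorial))
          + ∑ k ∈ Finset.range (n+1), risingFact θ k / k.factorial := by
      rw [← Finset.sum_add_distrib]
      apply Finset.sum_congr rfl
      intro k _
      push_cast
      ring
    push_cast at split ⊢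
    rw [split, ih, sumB θ hθ n]
    have key : (θ+1) * risingFact (θ+2) n = risingFact (θ+1) n * (θ+1+n) := by
      have h2 := risingFact_succ (θ+1) n
      rw [risingFact_succ'] at h2
      have e : θ+1+1 = θ+2 := by ring
      rw [e] at h2
      linarith
    have h2 : (n.factorial : ℝ) ≠ 0 := Nat.cast_ne_zero.mpr n.factorial_ne_zero
    have h1 : ((n+1).factorial : ℝ) = (n+1) * n.factorial := by
      push_cast [Nat.factorial_succ]; ring
    rw [risingFact_succ' θ n, risingFact_succ (θ+2) n, risingFact_succ (θ+1) n, h1]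
    field_simp
    linear_combination -key

lemma main_alg (θ : ℝ) (hθ : 0 < θ) (n : ℕ) (hn : 1 ≤ n) :
    ∑ k ∈ Finset.range n,
        θ * (1+θ) * (((n:ℝ) - k) + 1) / ((n:ℝ) * ((n:ℝ) + 2*θ + 1)) * (risingFact θ k / k.factorial)
      = risingFact θ n / n.factorial := by
  obtain ⟨m, rfl⟩ : ∃ m, n = m + 1 := ⟨n - 1, by omega⟩
  have hsum : ∀ k ∈ Finset.range (m+1),
      θ * (1+θ) * ((((m:ℝ)+1) - k) + 1) / (((m:ℝ)+1) * (((m:ℝ)+1) + 2*θ + 1)) * (risingFact θ k / k.factorial)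
        = θ * (1+θ) / (((m:ℝ)+1) * (((m:ℝ)+1) + 2*θ + 1)) * (((m:ℝ) + 2 - k) * (risingFact θ k / k.factorial)) := by
    intro k _
    ring
  push_cast
  rw [Finset.sum_congr rfl hsum, ← Finset.mul_sum, sumA θ hθ m]
  have key : (θ+1) * risingFact (θ+2) m = risingFact (θ+1) m * (θ+1+m) := by
    have h2 := risingFact_succ (θ+1) m
    rw [risingFact_succ'] at h2
    have e : θ+1+1 = θ+2 := by ring
    rw [e] at h2
    linarith
  have h2 : (m.factorial : ℝ) ≠ 0 := Nat.cast_ne_zero.mpr m.factorial_ne_zero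
  have h1 : ((m+1).factorial : ℝ) = (m+1) * m.factorial := by
    push_cast [Nat.factorial_succ]; ring
  have h3 : ((m:ℝ)+1) ≠ 0 := by positivity
  have h4 : ((m:ℝ)+1) + 2*θ + 1 ≠ 0 := by positivity
  rw [risingFact_succ' θ m, h1]
  field_simp
  linear_combination key

noncomputable def g2w (θ : ℝ) : List ℕ → ℝ
  | [] => 1
  | (a :: l) => θ * (1 + θ) * ((a : ℝ) + 1) /
      ((((a :: l).sum : ℕ) : ℝ) * ((((a :: l).sum : ℕ) : ℝ) + 2 * θ + 1)) * g2w θ l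

lemma prod_g2w (θ : ℝ) : ∀ l : List ℕ,
    θ ^ l.length * (1 + θ) ^ l.length *
      ∏ j : Fin l.length, ((l.get j : ℝ) + 1) /
        (((l.drop j).sum : ℝ) * (((l.drop j).sum : ℝ) + 2 * θ + 1)) = g2w θ l
  | [] => by simp [g2w]
  | (a :: l) => by
    rw [g2w]
    have hp : ∏ j : Fin (a :: l).length, (((a :: l).get j : ℝ) + 1) /
        ((((a :: l).drop j).sum : ℝ) * ((((a :: l).drop j).sum : ℝ) + 2 * θ + 1))
      = (((a : ℝ) + 1) / ((((a :: l).sum : ℕ) : ℝ) * ((((a :: l).sum : ℕ) : ℝ) + 2 * θ + 1))) *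
        ∏ j : Fin l.length, ((l.get j : ℝ) + 1) /
          (((l.drop j).sum : ℝ) * (((l.drop j).sum : ℝ) + 2 * θ + 1)) := by
      simp only [List.length_cons]
      rw [Fin.prod_univ_succ]
      simp only [Fin.val_zero, List.drop_zero, Fin.val_succ, List.drop_succ_cons,
        List.get_cons_succ]
      rfl
    rw [hp, ← prod_g2w θ l]
    simp only [List.length_cons, pow_succ]
    ring

def consComp (n : ℕ) (p : Σ k : ℕ, Composition k) (h : p.1 < n) : Composition n where
  blocks := (n - p.1) :: p.2.blocks
  blocks_pos := by
    intro i hi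
    rcases List.mem_cons.mp hi with h' | h'
    · omega
    · exact p.2.blocks_pos h'
  blocks_sum := by
    rw [List.sum_cons, p.2.blocks_sum]
    omega

lemma comp_sum_split (n : ℕ) (hn : 0 < n) (f : List ℕ → ℝ) :
    ∑ c : Composition n, f c.blocks
      = ∑ k ∈ Finset.range n, ∑ d : Composition k, f ((n - k) :: d.blocks) := by
  have step2 : ∑ p ∈ (Finset.range n).sigma (fun k => (Finset.univ : Finset (Composition k))),
      f ((n - p.1) :: p.2.blocks)
      = ∑ k ∈ Finset.range n, ∑ d : Composition k, f ((n - k) :: d.blocks) := by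
    rw [Finset.sum_sigma]
  rw [← step2]
  symm
  apply Finset.sum_bij (i := fun p hp => consComp n p ((Finset.mem_sigma.mp hp).1 |> Finset.mem_range.mp))
  · intro p hp
    exact Finset.mem_univ _
  · intro p1 hp1 p2 hp2 heq
    have h1 := Finset.mem_range.mp (Finset.mem_sigma.mp hp1).1
    have h2 := Finset.mem_range.mp (Finset.mem_sigma.mp hp2).1
    have hb : (n - p1.1) :: p1.2.blocks = (n - p2.1) :: p2.2.blocks :=
      congrArg Composition.blocks heq
    rw [List.cons.injEq] at hb
    obtain ⟨hb1, hb2⟩ := hb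
    have hk : p1.1 = p2.1 := by omega
    obtain ⟨k1, d1⟩ := p1
    obtain ⟨k2, d2⟩ := p2
    cases hk
    have hd : d1 = d2 := Composition.ext hb2
    rw [hd]
  · intro c _
    have hne : c.blocks ≠ [] := by
      intro h
      have := c.blocks_sum
      rw [h] at this
      simp at this
      omega
    obtain ⟨a, l, hbl⟩ := List.exists_cons_of_ne_nil hne
    have ha : 0 < a := c.blocks_pos (by rw [hbl]; exact List.mem_cons_self)
    have hsum := c.blocks_sum
    rw [hbl, List.sum_cons] at hsum
    have hla : a ≤ n := by omega
    refine ⟨⟨n - a, ⟨l, ?_, ?_⟩⟩, ?_, ?_⟩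
    · intro i hi
      exact c.blocks_pos (by rw [hbl]; exact List.mem_cons_of_mem _ hi)
    · show l.sum = n - a
      omega
    · refine Finset.mem_sigma.mpr ⟨Finset.mem_range.mpr (show n - a < n by omega), Finset.mem_univ _⟩
    · apply Composition.ext
      show (n - (n - a)) :: l = c.blocks
      rw [hbl]
      congr 1
      omega
  · intro p hp
    rfl

lemma sum_g2w (θ : ℝ) (hθ : 0 < θ) (n : ℕ) :
    ∑ c : Composition n, g2w θ c.blocks = risingFact θ n / n.factorial := by
  induction n using Nat.strong_induction_on with
  | _ n ih =>
    rcases Nat.eq_zero_or_pos n with h0 | hpos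
    · subst h0
      have hblocks : ∀ c : Composition 0, g2w θ c.blocks = 1 := by
        intro c
        have hnil : c.blocks = [] := by
          cases hb : c.blocks with
          | nil => rfl
          | cons a l =>
            have hs := c.blocks_sum
            rw [hb, List.sum_cons] at hs
            have ha := c.blocks_pos (by rw [hb]; exact List.mem_cons_self)
            omega
        rw [hnil]
        rfl
      rw [Finset.sum_congr rfl (fun c _ => hblocks c), Finset.sum_const, Finset.card_univ,
        composition_card]
      simp [risingFact]
    · rw [comp_sum_split n hpos (g2w θ)]
      have inner : ∀ k ∈ Finset.range n, ∑ d : Composition k, g2w θ ((n - k) :: d.blocks)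
          = θ * (1+θ) * (((n:ℝ) - k) + 1) / ((n:ℝ) * ((n:ℝ) + 2*θ + 1)) *
              (risingFact θ k / k.factorial) := by
        intro k hk
        have hk' := Finset.mem_range.mp hk
        have hterm : ∀ d : Composition k, g2w θ ((n - k) :: d.blocks)
            = θ * (1+θ) * (((n:ℝ) - k) + 1) / ((n:ℝ) * ((n:ℝ) + 2*θ + 1)) * g2w θ d.blocks := by
          intro d
          rw [g2w]
          have hs : ((n - k) :: d.blocks).sum = n := by
            rw [List.sum_cons, d.blocks_sum]; omega
          rw [hs, Nat.cast_sub hk'.le]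
        rw [Finset.sum_congr rfl (fun d _ => hterm d), ← Finset.mul_sum, ih k hk']
      rw [Finset.sum_congr rfl inner]
      exact main_alg θ hθ n hpos

theorem g2_sums_to_one (θ : ℝ) (hθ : 0 < θ) (n : ℕ) (hn : 1 ≤ n) :
    ∑ c : Composition n,
      ((n.factorial : ℝ) * θ ^ c.length * (1 + θ) ^ c.length / risingFact θ n) *
        ∏ j : Fin c.length,
          ((c.blocksFun j : ℝ) + 1) /
            (((c.blocks.drop j).sum : ℝ) * (((c.blocks.drop j).sum : ℝ) + 2 * θ + 1)) = 1 := by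
  have hrf : risingFact θ n ≠ 0 := ne_of_gt (risingFact_pos hθ n)
  have hfac : (n.factorial : ℝ) ≠ 0 := Nat.cast_ne_zero.mpr n.factorial_ne_zero
  have hterm : ∀ c : Composition n,
      ((n.factorial : ℝ) * θ ^ c.length * (1 + θ) ^ c.length / risingFact θ n) *
        ∏ j : Fin c.length,
          ((c.blocksFun j : ℝ) + 1) /
            (((c.blocks.drop j).sum : ℝ) * (((c.blocks.drop j).sum : ℝ) + 2 * θ + 1))
      = ((n.factorial : ℝ) / risingFact θ n) * g2w θ c.blocks := by
    intro c
    have hp : (∏ j : Fin c.length,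
          ((c.blocksFun j : ℝ) + 1) /
            (((c.blocks.drop j).sum : ℝ) * (((c.blocks.drop j).sum : ℝ) + 2 * θ + 1)))
        = ∏ j : Fin c.blocks.length,
          ((c.blocks.get j : ℝ) + 1) /
            (((c.blocks.drop j).sum : ℝ) * (((c.blocks.drop j).sum : ℝ) + 2 * θ + 1)) := rfl
    have hl : c.length = c.blocks.length := rfl
    rw [hp, ← prod_g2w θ c.blocks, hl]
    ring
  rw [Finset.sum_congr rfl (fun c _ => hterm c), ← Finset.mul_sum, sum_g2w θ hθ n]
  field_simp
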